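/- arXiv:1502.06396 — 5 statements merged into one kernel-verified Lean document; each statement's English description precedes it below -/
import Mathlib

section
/- Let k ≥ 2 be an integer and let W be a bounded bilateral weighted shift on ℓ²(ℤ, ℂ) with nonzero weights (λ_n)_{n∈ℤ} (so W is injective). If (W*W)^k = (W*)^k W^k, then W is quasinormal, i.e., W ∘ (W*W) = (W*W) ∘ W. -/
/-!
Pairing both sides of `(W*W)^k = (W*)^k W^k` with the basis vector `e n` gives
`|λ n|^(2k) = ‖W^k e n‖² = ∏_{i<k} |λ (n+i)|²`, so `t n = log |λ n|` satisfies
`k t n = t n + ⋯ + t (n+k-1)`: every term is the mean of the window of length `k` starting at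
it. For such a sequence the potential `Φ n = ∑_{j<k} ∑_{i<j} t (n+i)` is shift-invariant.
Applied to `u = sup t - t ≥ 0`, it gives `u n ≤ Φ n = Φ m ≤ k² u m` for all `n, m`; since
`inf u = 0`, `u` vanishes. Hence `|λ n|` is constant, and a weighted shift with weights of
constant modulus commutes with `W*W`.
-/

open Finset

def IsWindowMean (k : ℕ) (t : ℤ → ℝ) : Prop :=
  ∀ n : ℤ, (k : ℝ) * t n = ∑ i ∈ range k, t (n + i)

def windowPotential (k : ℕ) (t : ℤ → ℝ) (n : ℤ) : ℝ :=
  ∑ j ∈ range k, ∑ i ∈ range j, t (n + i)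

theorem le_windowPotential {k : ℕ} (hk : 2 ≤ k) {t : ℤ → ℝ} (ht : ∀ n, 0 ≤ t n) (n : ℤ) :
    t n ≤ windowPotential k t n := by
  have inner_nonneg (j : ℕ) (_ : j ∈ range k) : 0 ≤ ∑ i ∈ range j, t (n + i) :=
    sum_nonneg fun _ _ => ht _
  simpa [windowPotential] using single_le_sum inner_nonneg (mem_range.2 (show 1 < k by omega))

namespace IsWindowMean

variable {k : ℕ} {t : ℤ → ℝ}

theorem const_sub (h : IsWindowMean k t) (M : ℝ) : IsWindowMean k fun n => M - t n := by
  intro n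
  rw [sum_sub_distrib, sum_const, card_range, nsmul_eq_mul, mul_sub, h n]

theorem periodic_windowPotential (h : IsWindowMean k t) :
    Function.Periodic (windowPotential k t) 1 := by
  intro n
  have shift (j : ℕ) :
      ∑ i ∈ range j, t (n + 1 + i) = ∑ i ∈ range j, t (n + i) + t (n + j) - t n := by
    have := sum_range_succ' (fun i : ℕ => t (n + i)) j
    rw [sum_range_succ] at this
    simp only [Nat.cast_add, Nat.cast_one, Nat.cast_zero, add_zero] at this
    simp only [add_right_comm n 1, ← add_assoc] at this ⊢
    linarith
  simp only [windowPotential, shift, sum_sub_distrib, sum_add_distrib, ← h n, sum_const,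
    card_range, nsmul_eq_mul]
  ring

theorem windowPotential_le (h : IsWindowMean k t) (ht : ∀ n, 0 ≤ t n) (n : ℤ) :
    windowPotential k t n ≤ k ^ 2 * t n := by
  have window_le (j : ℕ) (hj : j ∈ range k) : ∑ i ∈ range j, t (n + i) ≤ k * t n := by
    rw [h n]
    exact sum_le_sum_of_subset_of_nonneg (range_subset_range.2 (mem_range.1 hj).le)
      fun _ _ _ => ht _
  calc windowPotential k t n ≤ ∑ _j ∈ range k, k * t n := sum_le_sum window_le
    _ = k ^ 2 * t n := by rw [sum_const, card_range, nsmul_eq_mul]; ring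

theorem eq_of_bddAbove (hk : 2 ≤ k) (h : IsWindowMean k t) (hbdd : BddAbove (Set.range t))
    (n m : ℤ) : t n = t m := by
  suffices eq_iSup : ∀ n, t n = ⨆ m, t m by rw [eq_iSup n, eq_iSup m]
  intro n
  set M := ⨆ m, t m
  set u := fun m => M - t m
  have hu : ∀ m, 0 ≤ u m := fun m => sub_nonneg.2 (le_ciSup hbdd m)
  have potential_const := (h.const_sub M).periodic_windowPotential
  have hun (m : ℤ) : u n ≤ k ^ 2 * u m :=
    calc u n ≤ windowPotential k u n := le_windowPotential hk hu n
      _ = windowPotential k u m := by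
        simpa using (potential_const.int_mul_eq n).trans (potential_const.int_mul_eq m).symm
      _ ≤ k ^ 2 * u m := (h.const_sub M).windowPotential_le hu m
  have hk0 : (0 : ℝ) < k ^ 2 := by positivity
  have hM : M ≤ M - u n / k ^ 2 := ciSup_le fun m => by
    rw [le_sub_comm, div_le_iff₀ hk0]
    linarith [hun m]
  have hun_nonpos : u n ≤ 0 := by
    simpa using (div_le_iff₀ hk0).1 (show u n / k ^ 2 ≤ 0 by linarith)
  linarith [hu n]

end IsWindowMean

theorem eq_of_pow_eq_prod_range {k : ℕ} (hk : 2 ≤ k) {a : ℤ → ℝ} (ha : ∀ n, 0 < a n)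
    (hbdd : BddAbove (Set.range a)) (h : ∀ n, a n ^ k = ∏ i ∈ range k, a (n + i)) (n m : ℤ) :
    a n = a m := by
  have log_mean : IsWindowMean k fun n => Real.log (a n) := fun n => by
    rw [← Real.log_pow, h n, Real.log_prod fun i _ => (ha _).ne']
  obtain ⟨B, hB⟩ := hbdd
  have log_bdd : BddAbove (Set.range fun n => Real.log (a n)) :=
    ⟨Real.log B, by
      rintro _ ⟨n, rfl⟩
      exact Real.log_le_log (ha n) (hB ⟨n, rfl⟩)⟩
  exact Real.log_injOn_pos (ha n) (ha m) (log_mean.eq_of_bddAbove hk log_bdd n m)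

open scoped lp
open ContinuousLinearMap

section WeightedShift

variable {𝕜 : Type*} [RCLike 𝕜]

def IsWeightedShift (W : ℓ²(ℤ, 𝕜) →L[𝕜] ℓ²(ℤ, 𝕜)) (l : ℤ → 𝕜) : Prop :=
  ∀ n, W (lp.single 2 n 1) = l n • lp.single 2 (n + 1) 1

theorem lp.inner_single_one_left {ι : Type*} [DecidableEq ι] (x : ℓ²(ι, 𝕜)) (m : ι) :
    inner 𝕜 (lp.single 2 m (1 : 𝕜)) x = x m := by
  simp [lp.inner_single_left]

namespace IsWeightedShift

variable {W : ℓ²(ℤ, 𝕜) →L[𝕜] ℓ²(ℤ, 𝕜)} {l : ℤ → 𝕜}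

open scoped ComplexConjugate

theorem adjoint_apply (hW : IsWeightedShift W l) (x : ℓ²(ℤ, 𝕜)) (m : ℤ) :
    adjoint W x m = conj (l m) * x (m + 1) := by
  rw [← lp.inner_single_one_left, adjoint_inner_right, hW m, inner_smul_left,
    lp.inner_single_one_left]

theorem adjoint_single (hW : IsWeightedShift W l) (m : ℤ) :
    adjoint W (lp.single 2 (m + 1) 1) = conj (l m) • lp.single 2 m 1 := by
  ext j
  rw [hW.adjoint_apply, lp.coeFn_smul, Pi.smul_apply]
  by_cases hj : j = m <;> simp [hj]

theorem apply (hW : IsWeightedShift W l) (x : ℓ²(ℤ, 𝕜)) (m : ℤ) :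
    W x m = l (m - 1) * x (m - 1) := by
  have := hW.adjoint_single (m - 1)
  rw [sub_add_cancel] at this
  rw [← lp.inner_single_one_left, ← adjoint_inner_left, this, inner_smul_left,
    lp.inner_single_one_left, RCLike.conj_conj]

theorem adjoint_mul_self_apply (hW : IsWeightedShift W l) (x : ℓ²(ℤ, 𝕜)) (m : ℤ) :
    (adjoint W * W) x m = (‖l m‖ : 𝕜) ^ 2 * x m := by
  rw [mul_apply_eq_comp, hW.adjoint_apply, hW.apply, add_sub_cancel_right, ← mul_assoc,
    RCLike.conj_mul]

theorem adjoint_mul_self_single (hW : IsWeightedShift W l) (n : ℤ) :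
    (adjoint W * W) (lp.single 2 n 1) = (‖l n‖ : 𝕜) ^ 2 • lp.single 2 n 1 := by
  rw [mul_apply_eq_comp, hW n, map_smul, hW.adjoint_single, smul_smul, RCLike.mul_conj]

theorem adjoint_mul_self_pow_single (hW : IsWeightedShift W l) (j : ℕ) (n : ℤ) :
    ((adjoint W * W) ^ j) (lp.single 2 n 1) = ((‖l n‖ : 𝕜) ^ 2) ^ j • lp.single 2 n 1 := by
  induction j with
  | zero => simp
  | succ j ih =>
    rw [pow_succ' (adjoint W * W), mul_apply_eq_comp, ih, map_smul, hW.adjoint_mul_self_single,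
      smul_smul, ← pow_succ]

theorem pow_single (hW : IsWeightedShift W l) (j : ℕ) (n : ℤ) :
    (W ^ j) (lp.single 2 n 1) = (∏ i ∈ range j, l (n + i)) • lp.single 2 (n + j) 1 := by
  induction j with
  | zero => simp
  | succ j ih =>
    rw [pow_succ', mul_apply_eq_comp, ih, map_smul, hW, smul_smul, prod_range_succ, mul_comm]
    push_cast
    ring_nf

theorem norm_le (hW : IsWeightedShift W l) (n : ℤ) : ‖l n‖ ≤ ‖W‖ := by
  simpa [hW n, norm_smul, lp.norm_single two_pos] using W.le_opNorm (lp.single 2 n 1)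

theorem norm_pow_eq_prod (hW : IsWeightedShift W l) {k : ℕ}
    (heq : (adjoint W * W) ^ k = adjoint W ^ k * W ^ k) (n : ℤ) :
    ‖l n‖ ^ k = ∏ i ∈ range k, ‖l (n + i)‖ := by
  have h := congrArg (fun T => inner 𝕜 (lp.single 2 n (1 : 𝕜)) (T (lp.single 2 n 1))) heq
  simp only at h
  rw [hW.adjoint_mul_self_pow_single, inner_smul_right, lp.inner_single_one_left,
    lp.single_apply_self, mul_one, ← star_eq_adjoint, ← star_pow, star_eq_adjoint,
    mul_apply_eq_comp, adjoint_inner_right, inner_self_eq_norm_sq_to_K, hW.pow_single,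
    norm_smul, norm_prod, lp.norm_single two_pos, norm_one, mul_one] at h
  have h : (‖l n‖ ^ k) ^ 2 = (∏ i ∈ range k, ‖l (n + i)‖) ^ 2 := by
    rw [← pow_mul, mul_comm, pow_mul]
    exact_mod_cast h
  exact (pow_left_inj₀ (by positivity) (by positivity) two_ne_zero).1 h

theorem commute_adjoint_mul_self (hW : IsWeightedShift W l) (h : ∀ n, ‖l (n + 1)‖ = ‖l n‖) :
    Commute W (adjoint W * W) := by
  ext x m
  rw [mul_apply_eq_comp W, mul_apply_eq_comp (adjoint W * W), hW.apply,
    hW.adjoint_mul_self_apply, hW.adjoint_mul_self_apply, hW.apply, ← h (m - 1), sub_add_cancel]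
  ring

end IsWeightedShift

end WeightedShift

/-- A bounded injective bilateral weighted shift `W` on `ℓ²(ℤ, ℂ)` satisfying
`(W*W)^k = (W*)^k W^k` for some `k ≥ 2` is quasinormal. -/
theorem bilateral_shift_quasinormal (k : ℕ) (hk : 2 ≤ k)
    (W : lp (fun _ : ℤ => ℂ) 2 →L[ℂ] lp (fun _ : ℤ => ℂ) 2)
    (l : ℤ → ℂ) (hl : ∀ n : ℤ, l n ≠ 0)
    (hW : ∀ n : ℤ, W (lp.single 2 n 1) = l n • lp.single 2 (n + 1) 1)
    (heq : (adjoint W * W) ^ k = (adjoint W) ^ k * W ^ k) :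
    W * (adjoint W * W) = (adjoint W * W) * W := by
  have hW : IsWeightedShift W l := hW
  have weights_bdd : BddAbove (Set.range fun n => ‖l n‖) :=
    ⟨‖W‖, Set.forall_mem_range.2 hW.norm_le⟩
  have norm_const := eq_of_pow_eq_prod_range hk (fun n => norm_pos_iff.2 (hl n)) weights_bdd
    (hW.norm_pow_eq_prod heq)
  exact (hW.commute_adjoint_mul_self fun n => norm_const (n + 1) n).eq
end

section
/- Let k ≥ 1 be an integer and consider the polynomial p(z) = k·z^k − (z^{k−1} + z^{k−2} + · · · + z + 1) over ℂ. Then every complex root z of p with z ≠ 1 satisfies |z| < 1 (and p(1) = 0). -/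
/-!
If `p z = 0` with `‖z‖ ≥ 1`, dividing `k z^k = ∑_{i<k} z^i` by `z^k` writes `k` as the sum of the
`k` powers `z⁻¹, …, z⁻ᵏ`, all in the closed unit disk. Taking real parts, such a sum can only reach
`k` if every term equals `1`; in particular `z⁻¹ = 1`.
-/

open Polynomial

namespace Complex

open scoped ComplexOrder in
theorem eq_one_of_norm_le_one_of_re_eq_one {w : ℂ} (hw : ‖w‖ ≤ 1) (hre : w.re = 1) : w = 1 := by
  have hnonneg : 0 ≤ w := re_eq_norm.mp (le_antisymm (re_le_norm w) (by rwa [hre]))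
  rw [← re_add_im w, ← (nonneg_iff.mp hnonneg).2, hre]
  simp

theorem eq_one_of_sum_eq_card {ι : Type*} {s : Finset ι} {f : ι → ℂ} (hf : ∀ i ∈ s, ‖f i‖ ≤ 1)
    (hsum : ∑ i ∈ s, f i = s.card) : ∀ i ∈ s, f i = 1 := by
  have hre_le : ∀ i ∈ s, (f i).re ≤ 1 := fun i hi => (re_le_norm _).trans (hf i hi)
  have hre_sum : ∑ i ∈ s, (f i).re = ∑ i ∈ s, (1 : ℝ) := by
    simpa [re_sum] using congrArg re hsum
  intro i hi
  exact eq_one_of_norm_le_one_of_re_eq_one (hf i hi)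
    ((Finset.sum_eq_sum_iff_of_le hre_le).mp hre_sum i hi)

end Complex

theorem sum_inv_pow_eq_of_mul_pow_eq_geom_sum {K : Type*} [Field K] {k : ℕ} {z : K} (hz : z ≠ 0)
    (h : k * z ^ k = ∑ i ∈ Finset.range k, z ^ i) :
    ∑ i ∈ Finset.range k, z⁻¹ ^ (k - i) = k := by
  calc ∑ i ∈ Finset.range k, z⁻¹ ^ (k - i) = (∑ i ∈ Finset.range k, z ^ i) * (z ^ k)⁻¹ := by
        rw [Finset.sum_mul]
        refine Finset.sum_congr rfl fun i hi => ?_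
        rw [inv_pow, pow_sub₀ _ hz (Finset.mem_range.mp hi).le]
        field_simp
    _ = k := by rw [← h]; field_simp

/-- Every root of `p(z) = k·z^k − (z^{k−1} + ⋯ + z + 1)` other than `z = 1`
lies in the open unit disk, and `p(1) = 0`. -/
theorem roots_of_kzk_minus_geom (k : ℕ) (hk : 1 ≤ k) (p : ℂ[X])
    (hp : p = C (k : ℂ) * X ^ k - ∑ i ∈ Finset.range k, X ^ i) :
    p.eval 1 = 0 ∧ ∀ z : ℂ, p.eval z = 0 → z ≠ 1 → ‖z‖ < 1 := by
  subst hp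
  refine ⟨by simp [eval_finsetSum], fun z hz hz1 => ?_⟩
  simp only [eval_sub, eval_mul, eval_C, eval_pow, eval_X, eval_finsetSum, sub_eq_zero] at hz
  by_contra! hz_ge
  have hz0 : z ≠ 0 := norm_pos_iff.mp (one_pos.trans_le hz_ge)
  have hinv_le : ‖z⁻¹‖ ≤ 1 := by rw [norm_inv]; exact inv_le_one_of_one_le₀ hz_ge
  have hterms : ∀ i ∈ Finset.range k, z⁻¹ ^ (k - i) = 1 := by
    refine Complex.eq_one_of_sum_eq_card (fun i _ => ?_) ?_
    · rw [norm_pow]; exact pow_le_one₀ (norm_nonneg _) hinv_le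
    · rw [Finset.card_range]; exact sum_inv_pow_eq_of_mul_pow_eq_geom_sum hz0 hz
  have hlast := hterms (k - 1) (Finset.mem_range.mpr (by omega))
  rw [Nat.sub_sub_self hk, pow_one, inv_eq_one] at hlast
  exact hz1 hlast
end

section
/- Let k ∈ ℕ (k ≥ 1) and let (a_n)_{n∈ℤ} be a bounded sequence of real numbers satisfying the recurrence k·a_n = a_{n+1} + a_{n+2} + · · · + a_{n+k} for all n ∈ ℤ. Then (a_n)_{n∈ℤ} is a constant sequence. -/
/-!
The recurrence is linear and shift-invariant, so the forward difference `d = Δa` is again a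
solution, and its sums over windows telescope, hence are bounded. With `s = sup d`, the gap
`s - d` is a nonnegative solution, so `k (s - d n) ≥ s - d (n + 1)`: the gap grows at most by a
factor `k` per step. If `s > 0`, starting close enough to the supremum, `d` stays above `s / 2` on
an arbitrarily long window, contradicting the bound on window sums. Hence `d ≤ 0`, symmetrically
`d ≥ 0`, and `a` is constant.
-/

open Finset

def MeanRecurrence (k : ℕ) (a : ℤ → ℝ) : Prop :=
  ∀ n : ℤ, (k : ℝ) * a n = ∑ i ∈ range k, a (n + i + 1)

namespace MeanRecurrence

variable {k : ℕ} {a b : ℤ → ℝ}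

theorem const (k : ℕ) (c : ℝ) : MeanRecurrence k fun _ ↦ c := fun _ ↦ by simp

theorem sub (ha : MeanRecurrence k a) (hb : MeanRecurrence k b) :
    MeanRecurrence k (a - b) := fun n ↦ by
  simp only [Pi.sub_apply, mul_sub, ha n, hb n, sum_sub_distrib]

theorem neg (ha : MeanRecurrence k a) : MeanRecurrence k (-a) := fun n ↦ by
  simp only [Pi.neg_apply, mul_neg, ha n, sum_neg_distrib]

theorem comp_add_one (ha : MeanRecurrence k a) : MeanRecurrence k fun n ↦ a (n + 1) :=
  fun n ↦ by simp only [ha (n + 1), add_right_comm]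

theorem fwdDiff (ha : MeanRecurrence k a) : MeanRecurrence k (fwdDiff 1 a) :=
  ha.comp_add_one.sub ha

theorem le_mul_of_nonneg (hk : 1 ≤ k) (ha : MeanRecurrence k a) (h0 : ∀ n, 0 ≤ a n) (n : ℤ) :
    a (n + 1) ≤ k * a n := by
  obtain ⟨k, rfl⟩ := Nat.exists_eq_add_of_le' hk
  rw [ha n, sum_range_succ']
  simpa using sum_nonneg fun i _ ↦ h0 (n + (i + 1 : ℕ) + 1)

theorem le_pow_mul_of_nonneg (hk : 1 ≤ k) (ha : MeanRecurrence k a) (h0 : ∀ n, 0 ≤ a n)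
    (n : ℤ) (j : ℕ) : a (n + j) ≤ k ^ j * a n := by
  induction j with
  | zero => simp
  | succ j ih =>
    calc a (n + (j + 1 : ℕ)) = a (n + j + 1) := by push_cast; ring_nf
      _ ≤ k * a (n + j) := ha.le_mul_of_nonneg hk h0 _
      _ ≤ k * (k ^ j * a n) := by gcongr
      _ = k ^ (j + 1) * a n := by ring

theorem exists_window_gt (hk : 1 ≤ k) (ha : MeanRecurrence k a) (hbdd : BddAbove (Set.range a))
    (m : ℕ) {ε : ℝ} (hε : 0 < ε) : ∃ n : ℤ, ∀ j < m, (⨆ i, a i) - ε < a (n + j) := by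
  set s := ⨆ i, a i
  have hgap : MeanRecurrence k fun n ↦ s - a n := (const k s).sub ha
  have hgap0 : ∀ n, 0 ≤ s - a n := fun n ↦ sub_nonneg.2 (le_ciSup hbdd n)
  have hkm : (0 : ℝ) < k ^ m := by positivity
  obtain ⟨n, hn⟩ := exists_lt_of_lt_ciSup (sub_lt_self s (div_pos hε hkm))
  refine ⟨n, fun j hj ↦ ?_⟩
  have : s - a (n + j) < ε := calc
    s - a (n + j) ≤ k ^ j * (s - a n) := hgap.le_pow_mul_of_nonneg hk hgap0 n j
    _ ≤ k ^ m * (s - a n) :=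
      mul_le_mul_of_nonneg_right (pow_le_pow_right₀ (mod_cast hk) hj.le) (hgap0 n)
    _ < k ^ m * (ε / k ^ m) := by gcongr; linarith
    _ = ε := mul_div_cancel₀ ε hkm.ne'
  linarith

theorem nonpos_of_sum_le (hk : 1 ≤ k) (ha : MeanRecurrence k a) {B : ℝ}
    (hsum : ∀ (n : ℤ) (m : ℕ), ∑ j ∈ range m, a (n + j) ≤ B) (n : ℤ) : a n ≤ 0 := by
  have hbdd : BddAbove (Set.range a) := ⟨B, by rintro _ ⟨n, rfl⟩; simpa using hsum n 1⟩
  set s := ⨆ i, a i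
  suffices s ≤ 0 from (le_ciSup hbdd n).trans this
  by_contra! hs
  obtain ⟨m, hm⟩ := exists_nat_gt (B / (s / 2))
  obtain ⟨n, hn⟩ := ha.exists_window_gt hk hbdd m (half_pos hs)
  have : m * (s / 2) ≤ B := calc
    m * (s / 2) = ∑ _j ∈ range m, (s - s / 2) := by
      rw [sum_const, card_range, nsmul_eq_mul]; ring
    _ ≤ ∑ j ∈ range m, a (n + j) := sum_le_sum fun j hj ↦ (hn j (mem_range.1 hj)).le
    _ ≤ B := hsum n m
  rw [div_lt_iff₀ (half_pos hs)] at hm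
  linarith

theorem eq_zero_of_abs_sum_le (hk : 1 ≤ k) (ha : MeanRecurrence k a) {B : ℝ}
    (hsum : ∀ (n : ℤ) (m : ℕ), |∑ j ∈ range m, a (n + j)| ≤ B) : a = 0 := by
  funext n
  refine le_antisymm (ha.nonpos_of_sum_le hk (fun n m ↦ (le_abs_self _).trans (hsum n m)) n) ?_
  have := ha.neg.nonpos_of_sum_le hk (B := B) (fun n m ↦ by
    simpa only [Pi.neg_apply, sum_neg_distrib] using (neg_le_abs _).trans (hsum n m)) n
  simpa using this

end MeanRecurrence

theorem sum_range_fwdDiff_one {G : Type*} [AddCommGroup G] (a : ℤ → G) (n : ℤ) (m : ℕ) :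
    ∑ j ∈ range m, fwdDiff 1 a (n + j) = a (n + m) - a n := by
  simpa [fwdDiff, add_assoc] using sum_range_sub (fun j : ℕ ↦ a (n + j)) m

/-- A bounded real sequence `(a_n)_{n ∈ ℤ}` satisfying the recurrence
`k·a_n = a_{n+1} + ⋯ + a_{n+k}` for all `n ∈ ℤ` is constant. -/
theorem bounded_mean_recurrence_constant (k : ℕ) (hk : 1 ≤ k) (a : ℤ → ℝ)
    (hbdd : ∃ C : ℝ, ∀ n : ℤ, |a n| ≤ C)
    (hrec : ∀ n : ℤ, (k : ℝ) * a n = ∑ i ∈ Finset.range k, a (n + (i : ℤ) + 1)) :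
    ∀ m n : ℤ, a m = a n := by
  obtain ⟨C, hC⟩ := hbdd
  have hdiff : fwdDiff 1 a = 0 := by
    refine (MeanRecurrence.fwdDiff hrec).eq_zero_of_abs_sum_le hk (B := C + C) fun n m ↦ ?_
    rw [sum_range_fwdDiff_one]
    exact (abs_sub _ _).trans (add_le_add (hC _) (hC _))
  have hper : Function.Periodic a 1 := fun n ↦ sub_eq_zero.1 (congrFun hdiff n)
  intro m n
  simpa using (hper.zsmul_eq m).trans (hper.zsmul_eq n).symm
end

section
/- Let n ≥ 2 be an integer. Then there exist a rational number q with 0 < q < 1 and a rational number c > 0 such that (S_{n−1}(q))^n = c · S_0(q) and, for every k ∈ {1, 2, …, n−2}, the real number c^{k/(n−1)} is irrational; equivalently, there is no rational number s with s^{n−1} = c^k. (When n = 2 the last condition is vacuous.) -/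
/-!
Take `q = 1/2`. Shifting the summation index and expanding `(j + 2)^k` binomially gives
`S_k(1/2) = 2 + ∑_{i<k} (k choose i) S_i(1/2)`, and since `∑_{0<i<k} (k choose i) = 2^k - 2` is even,
induction shows `S_k(1/2) = 4N` with `N` odd for every `k ≥ 1` (so `N` is an ordered Bell number).
With `c = 2^(2n-1) N^n` we get `S_{n-1}(1/2)^n = (4N)^n = 2c = c · S_0(1/2)`. The `2`-adic valuation
of `c` is `2n - 1`, which is coprime to `n - 1`, so `s^(n-1) = c^k` forces `n - 1 ∣ k`.
-/

open Finset

noncomputable def S (k : ℕ) (x : ℝ) : ℝ := ∑' j : ℕ, ((j : ℝ) + 1) ^ k * x ^ j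

section

variable {x : ℝ}

lemma summable_add_one_pow_mul_geometric (k : ℕ) (hx : ‖x‖ < 1) :
    Summable fun j : ℕ => ((j : ℝ) + 1) ^ k * x ^ j := by
  have hbinom : ∀ j : ℕ, ((j : ℝ) + 1) ^ k * x ^ j
      = ∑ i ∈ range (k + 1), (k.choose i : ℝ) * ((j : ℝ) ^ i * x ^ j) := by
    intro j
    rw [add_pow, sum_mul]
    exact sum_congr rfl fun i _ => by ring
  simp_rw [hbinom]
  exact summable_sum fun i _ => (summable_pow_mul_geometric_of_norm_lt_one i hx).mul_left _

lemma S_eq_one_add_mul_sum (k : ℕ) (hx : ‖x‖ < 1) :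
    S k x = 1 + x * ∑ i ∈ range (k + 1), (k.choose i : ℝ) * S i x := by
  have hbinom : ∀ j : ℕ, ((j : ℝ) + 1 + 1) ^ k * x ^ (j + 1)
      = x * ∑ i ∈ range (k + 1), (k.choose i : ℝ) * (((j : ℝ) + 1) ^ i * x ^ j) := by
    intro j
    rw [add_pow, sum_mul, mul_sum]
    exact sum_congr rfl fun i _ => by ring
  rw [S, (summable_add_one_pow_mul_geometric k hx).tsum_eq_zero_add]
  simp only [Nat.cast_zero, zero_add, one_pow, pow_zero, mul_one, Nat.cast_add, Nat.cast_one,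
    hbinom, tsum_mul_left]
  rw [Summable.tsum_finsetSum fun i _ =>
    (summable_add_one_pow_mul_geometric i hx).mul_left _]
  simp only [tsum_mul_left, S]

end

lemma S_zero_half : S 0 (1 / 2) = 2 := by
  simp only [S, pow_zero, one_mul]
  rw [tsum_geometric_of_lt_one (by norm_num) (by norm_num)]
  norm_num

lemma S_half_eq_two_add_sum (k : ℕ) :
    S k (1 / 2) = 2 + ∑ i ∈ range k, (k.choose i : ℝ) * S i (1 / 2) := by
  have h := S_eq_one_add_mul_sum k (x := 1 / 2) (by norm_num)
  rw [sum_range_succ, Nat.choose_self, Nat.cast_one, one_mul] at h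
  linarith

lemma even_sum_range_choose_succ_mul_odd (m : ℕ) {N : ℕ → ℕ} (hN : ∀ i < m, Odd (N i)) :
    Even (∑ i ∈ range m, (m + 1).choose (i + 1) * N i) := by
  have hchoose : ∑ i ∈ range m, (m + 1).choose (i + 1) + 2 = 2 ^ (m + 1) := by
    rw [← Nat.sum_range_choose, sum_range_succ', sum_range_succ]
    simp
  have hmod : ∑ i ∈ range m, ((m + 1).choose (i + 1) : ZMod 2) = 0 := by
    have h := congrArg (Nat.cast : ℕ → ZMod 2) hchoose
    push_cast at h
    reduce_mod_char at h
    simpa using h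
  rw [← ZMod.natCast_eq_zero_iff_even]
  push_cast
  rw [← hmod]
  exact sum_congr rfl fun i hi => by
    rw [(ZMod.natCast_eq_one_iff_odd).2 (hN i (mem_range.1 hi)), mul_one]

lemma exists_odd_S_half_eq_four_mul (k : ℕ) (hk : 1 ≤ k) :
    ∃ N : ℕ, Odd N ∧ S k (1 / 2) = 4 * N := by
  induction k using Nat.strong_induction_on with
  | _ k ih =>
  obtain ⟨m, rfl⟩ : ∃ m, k = m + 1 := ⟨k - 1, by omega⟩
  choose! N hNodd hN using fun i (hi : i < m) => ih (i + 1) (by omega) (by omega)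
  refine ⟨1 + ∑ i ∈ range m, (m + 1).choose (i + 1) * N i,
    (even_sum_range_choose_succ_mul_odd m hNodd).one_add, ?_⟩
  rw [S_half_eq_two_add_sum, sum_range_succ', S_zero_half]
  push_cast
  rw [mul_add, mul_sum, sum_congr rfl fun i hi => by rw [hN i (mem_range.1 hi)]]
  simp only [Nat.choose_zero_right, Nat.cast_one]
  ring_nf

lemma dvd_of_pow_eq_pow_of_isCoprime_padicValRat {p : ℕ} [Fact p.Prime] {c s : ℚ} {m k : ℕ}
    (hcop : IsCoprime (m : ℤ) (padicValRat p c)) (h : s ^ m = c ^ k) : m ∣ k := by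
  have hval : k * padicValRat p c = m * padicValRat p s := by
    rw [← padicValRat.pow, ← padicValRat.pow, h]
  exact Int.natCast_dvd_natCast.1 (hcop.dvd_of_dvd_mul_right ⟨_, hval⟩)

lemma padicValRat_two_pow_mul_odd_pow {N : ℕ} (hN : Odd N) (a b : ℕ) :
    padicValRat 2 ((2 : ℚ) ^ a * N ^ b) = a := by
  rw [show (2 : ℚ) ^ a * N ^ b = ((2 ^ a * N ^ b : ℕ) : ℚ) by push_cast; rfl, padicValRat.of_nat,
    padicValNat.mul (by positivity) (pow_ne_zero _ hN.pos.ne'), padicValNat.prime_pow,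
    padicValNat.pow, padicValNat.eq_zero_of_not_dvd hN.not_two_dvd_nat]
  simp

lemma irrational_rpow_div_of_not_exists_pow_eq {c : ℚ} (hc : 0 ≤ c) {m k : ℕ} (hm : m ≠ 0)
    (h : ¬∃ s : ℚ, s ^ m = c ^ k) : Irrational ((c : ℝ) ^ ((k : ℝ) / m)) := by
  rintro ⟨s, hs⟩
  refine h ⟨s, ?_⟩
  have hsR : (s : ℝ) ^ m = (c : ℝ) ^ k := by
    rw [hs, ← Real.rpow_natCast, ← Real.rpow_mul (by exact_mod_cast hc),
      div_mul_cancel₀ _ (by exact_mod_cast hm), Real.rpow_natCast]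
  exact_mod_cast hsR

/-- For every `n ≥ 2` there are rationals `q ∈ (0,1)` and `c > 0` with
`(S_{n−1}(q))^n = c · S_0(q)` and such that `c^{k/(n−1)}` is irrational for
every `k ∈ {1, …, n−2}` (equivalently, no rational `s` satisfies
`s^{n−1} = c^k`). -/
theorem exists_q_c_for_shift_construction (n : ℕ) (hn : 2 ≤ n) :
    ∃ q c : ℚ, 0 < q ∧ q < 1 ∧ 0 < c ∧
      (∑' j : ℕ, ((j : ℝ) + 1) ^ (n - 1) * (q : ℝ) ^ j) ^ n
        = (c : ℝ) * ∑' j : ℕ, (q : ℝ) ^ j ∧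
      ∀ k : ℕ, 1 ≤ k → k ≤ n - 2 →
        (¬∃ s : ℚ, s ^ (n - 1) = c ^ k) ∧
        Irrational ((c : ℝ) ^ ((k : ℝ) / ((n : ℝ) - 1))) := by
  obtain ⟨m, rfl⟩ : ∃ m, n = m + 1 := ⟨n - 1, by omega⟩
  obtain ⟨N, hNodd, hSN⟩ := exists_odd_S_half_eq_four_mul m (by omega)
  refine ⟨1 / 2, 2 ^ (2 * m + 1) * N ^ (m + 1), by norm_num, by norm_num,
    by have := hNodd.pos; positivity, ?_, fun k hk1 hk2 => ?_⟩
  · have hS0 := S_zero_half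
    simp only [S, pow_zero, one_mul] at hS0 hSN
    push_cast
    rw [hSN, hS0, pow_succ 2, pow_mul]
    ring
  · have hcop : IsCoprime (m : ℤ) (padicValRat 2 (2 ^ (2 * m + 1) * N ^ (m + 1))) := by
      rw [padicValRat_two_pow_mul_odd_pow hNodd]
      exact ⟨-2, 1, by push_cast; ring⟩
    have hroot : ¬∃ s : ℚ, s ^ m = (2 ^ (2 * m + 1) * N ^ (m + 1)) ^ k := fun ⟨s, hs⟩ =>
      absurd (Nat.le_of_dvd hk1 (dvd_of_pow_eq_pow_of_isCoprime_padicValRat hcop hs)) (by omega)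
    refine ⟨by simpa using hroot, ?_⟩
    simpa using irrational_rpow_div_of_not_exists_pow_eq (by positivity) (by omega) hroot
end

section
/- Let n ≥ 2 be an integer. Then there exists a bounded injective linear operator A on the complex Hilbert space ℓ²(ℕ, ℂ) such that (A*A)^n = (A*)^n A^n, while (A*A)^k ≠ (A*)^k A^k for every integer k ≥ 2 with k ≠ n; in particular A is not quasinormal, i.e., A ∘ (A*A) ≠ (A*A) ∘ A. -/
/-!
Take the weighted shift `A` on the directed tree with root `0`, whose children are `1` and `2`,
and in which every other vertex `j` has the single child `j + 2`. With `m = n - 1`, the edges out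
of the root carry the weights `(4 ^ m + 1) ^ (-1/2)` and `2 ^ m (4 ^ m + 1) ^ (-1/2)`, and the two
branches the constant weights `2` and `1/2`. Then `A*ᵏ Aᵏ` and `(A* A)ᵏ` are diagonal in the
standard basis. On the branches both are `4 ^ (±k)`. At the root `(A* A)ᵏ` is `1`, whereas
`A*ᵏ Aᵏ` is `(x + 4 ^ m / x) / (4 ^ m + 1)` with `x = 4 ^ (k - 1)`, which is `1` exactly when
`(x - 1) (x - 4 ^ m) = 0`, that is when `k = 1` or `k = n`. Finally `A (A* A)` and `(A* A) A`
differ at vertex `1` of the image of the root vector, by the factor `4`.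
-/

open ContinuousLinearMap

open scoped lp ComplexConjugate

section WeightedComposition

variable {𝕜 ι κ : Type*} [RCLike 𝕜]

theorem lp.sum_norm_sq_le_norm_sq (f : ℓ²(ι, 𝕜)) (s : Finset ι) :
    ∑ i ∈ s, ‖f i‖ ^ 2 ≤ ‖f‖ ^ 2 := by
  simpa [Real.rpow_two] using lp.sum_rpow_le_norm_rpow (p := 2) (by norm_num) f s

theorem lp.apply_eq_inner_single [DecidableEq ι] (f : ℓ²(ι, 𝕜)) (i : ι) :
    f i = inner 𝕜 (lp.single 2 i 1) f := by
  simp [lp.inner_single_left]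

theorem lp.pow_apply_single_of_apply_single [DecidableEq ι] {T : ℓ²(ι, 𝕜) →L[𝕜] ℓ²(ι, 𝕜)}
    {i : ι} {c : 𝕜} (hT : ∀ a, T (lp.single 2 i a) = lp.single 2 i (c * a)) (k : ℕ) (a : 𝕜) :
    (T ^ k) (lp.single 2 i a) = lp.single 2 i (c ^ k * a) := by
  induction k with
  | zero => simp
  | succ k ih => rw [pow_succ', mul_apply_eq_comp, ih, hT, pow_succ', mul_assoc]

theorem sum_norm_mul_comp_sq_le {w : ι → 𝕜} {σ : ι → κ} {M : ℝ} (hM : 0 ≤ M)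
    (hw : ∀ j (s : Finset ι), (∀ i ∈ s, σ i = j) → ∑ i ∈ s, ‖w i‖ ^ 2 ≤ M)
    (f : ℓ²(κ, 𝕜)) (s : Finset ι) :
    ∑ i ∈ s, ‖w i * f (σ i)‖ ^ 2 ≤ M * ‖f‖ ^ 2 := by
  classical
  calc ∑ i ∈ s, ‖w i * f (σ i)‖ ^ 2
      = ∑ j ∈ s.image σ, (∑ i ∈ s with σ i = j, ‖w i‖ ^ 2) * ‖f j‖ ^ 2 := by
        rw [← Finset.sum_fiberwise_of_maps_to fun i hi => Finset.mem_image_of_mem σ hi]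
        refine Finset.sum_congr rfl fun j _ => ?_
        rw [Finset.sum_mul]
        refine Finset.sum_congr rfl fun i hi => ?_
        rw [(Finset.mem_filter.1 hi).2, norm_mul, mul_pow]
    _ ≤ ∑ j ∈ s.image σ, M * ‖f j‖ ^ 2 :=
        Finset.sum_le_sum fun j _ => mul_le_mul_of_nonneg_right
          (hw j _ fun i hi => (Finset.mem_filter.1 hi).2) (by positivity)
    _ = M * ∑ j ∈ s.image σ, ‖f j‖ ^ 2 := (Finset.mul_sum ..).symm
    _ ≤ M * ‖f‖ ^ 2 := mul_le_mul_of_nonneg_left (lp.sum_norm_sq_le_norm_sq f _) hM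

noncomputable def weightedComp (w : ι → 𝕜) (σ : ι → κ) {M : ℝ} (hM : 0 ≤ M)
    (hw : ∀ j (s : Finset ι), (∀ i ∈ s, σ i = j) → ∑ i ∈ s, ‖w i‖ ^ 2 ≤ M) :
    ℓ²(κ, 𝕜) →L[𝕜] ℓ²(ι, 𝕜) :=
  LinearMap.mkContinuous
    { toFun f := ⟨fun i => w i * f (σ i), memℓp_gen' (C := M * ‖f‖ ^ 2) fun s => by
        simpa [Real.rpow_two] using sum_norm_mul_comp_sq_le hM hw f s⟩
      map_add' f g := lp.ext <| funext fun i => mul_add _ _ _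
      map_smul' c f := lp.ext <| funext fun i => mul_left_comm _ _ _ }
    √M fun f => lp.norm_le_of_forall_sum_le (p := 2) (by norm_num) (by positivity) fun s => by
      simpa [Real.rpow_two, mul_pow, Real.sq_sqrt hM] using sum_norm_mul_comp_sq_le hM hw f s

variable {w : ι → 𝕜} {σ : ι → κ} {M : ℝ} {hM : 0 ≤ M}
  {hw : ∀ j (s : Finset ι), (∀ i ∈ s, σ i = j) → ∑ i ∈ s, ‖w i‖ ^ 2 ≤ M}

@[simp]
theorem weightedComp_apply (f : ℓ²(κ, 𝕜)) (i : ι) :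
    weightedComp w σ hM hw f i = w i * f (σ i) :=
  rfl

theorem weightedComp_injective (hσ : ∀ j, ∃ i, σ i = j ∧ w i ≠ 0) :
    Function.Injective (weightedComp w σ hM hw) := by
  refine (injective_iff_map_eq_zero _).2 fun f hf => lp.ext <| funext fun j => ?_
  obtain ⟨i, rfl, hi⟩ := hσ j
  simpa [hi] using congr($hf i)

theorem adjoint_weightedComp_single [DecidableEq ι] [DecidableEq κ] (i : ι) (a : 𝕜) :
    adjoint (weightedComp w σ hM hw) (lp.single 2 i a) = lp.single 2 (σ i) (conj (w i) * a) := by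
  refine lp.ext <| funext fun j => ?_
  rw [lp.apply_eq_inner_single, adjoint_inner_right, ← inner_conj_symm, lp.inner_single_left]
  by_cases h : σ i = j <;> simp [h, mul_comm]

end WeightedComposition

theorem pow_add_div_pow_div_eq_one_iff {a : ℝ} (ha : 1 < a) {k m : ℕ} :
    (a ^ k + a ^ m / a ^ k) / (a ^ m + 1) = 1 ↔ k = 0 ∨ k = m := by
  have hak : 0 < a ^ k := by positivity
  have key : a ^ k + a ^ m / a ^ k - (a ^ m + 1) = (a ^ k - 1) * (a ^ k - a ^ m) / a ^ k := by
    field_simp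
    ring
  rw [div_eq_one_iff_eq (by positivity), ← sub_eq_zero, key, div_eq_zero_iff,
    or_iff_left hak.ne', mul_eq_zero, sub_eq_zero, sub_eq_zero, ← pow_zero a,
    pow_right_inj₀ (by positivity) ha.ne', pow_right_inj₀ (by positivity) ha.ne']

section TreeShift

variable (m : ℕ)

noncomputable def treeWeight : ℕ → ℝ
  | 0 => 0
  | 1 => (√(4 ^ m + 1))⁻¹
  | 2 => 2 ^ m * (√(4 ^ m + 1))⁻¹
  | j + 3 => if Even j then 2 else 2⁻¹

noncomputable def branchRatio (j : ℕ) : ℝ := if Odd j then 4 else 4⁻¹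

variable {m}

theorem treeWeight_one_sq : treeWeight m 1 ^ 2 = (4 ^ m + 1)⁻¹ := by
  rw [treeWeight, inv_pow, Real.sq_sqrt (by positivity)]

theorem treeWeight_two_sq : treeWeight m 2 ^ 2 = 4 ^ m * (4 ^ m + 1)⁻¹ := by
  rw [treeWeight, mul_pow, inv_pow, Real.sq_sqrt (by positivity), ← pow_mul, pow_mul']
  norm_num

theorem treeWeight_add_two_sq {j : ℕ} (hj : j ≠ 0) :
    treeWeight m (j + 2) ^ 2 = branchRatio j := by
  obtain ⟨i, rfl⟩ := Nat.exists_eq_succ_of_ne_zero hj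
  by_cases hi : Even i <;> simp [treeWeight, branchRatio, hi, Nat.odd_add_one] <;> norm_num

theorem treeWeight_pos {i : ℕ} (hi : i ≠ 0) : 0 < treeWeight m i := by
  match i, hi with
  | 1, _ | 2, _ => simp only [treeWeight]; positivity
  | j + 3, _ => simp only [treeWeight]; split_ifs <;> norm_num

theorem branchRatio_one : branchRatio 1 = 4 := by
  norm_num [branchRatio]

theorem branchRatio_two : branchRatio 2 = 4⁻¹ := by
  norm_num [branchRatio]

theorem branchRatio_add_two (j : ℕ) : branchRatio (j + 2) = branchRatio j := by
  simp [branchRatio, Nat.odd_add]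

theorem treeWeight_sq_fiber_sum_le {j : ℕ} {s : Finset ℕ} (hs : ∀ i ∈ s, i - 2 = j) :
    ∑ i ∈ s, ‖(treeWeight m i : ℂ)‖ ^ 2 ≤ 4 := by
  simp only [Complex.norm_real, Real.norm_eq_abs, sq_abs]
  rcases eq_or_ne j 0 with rfl | hj
  · calc ∑ i ∈ s, treeWeight m i ^ 2 ≤ ∑ i ∈ {0, 1, 2}, treeWeight m i ^ 2 :=
          Finset.sum_le_sum_of_subset_of_nonneg (fun i hi => by have := hs i hi; simp; omega)
            fun _ _ _ => sq_nonneg _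
      _ ≤ 4 := by
          rw [Finset.sum_insert (by simp), Finset.sum_pair (by simp), treeWeight_one_sq,
            treeWeight_two_sq, ← one_add_mul, add_comm 1, mul_inv_cancel₀ (by positivity)]
          norm_num [treeWeight]
  · calc ∑ i ∈ s, treeWeight m i ^ 2 ≤ ∑ i ∈ {j + 2}, treeWeight m i ^ 2 :=
          Finset.sum_le_sum_of_subset_of_nonneg (fun i hi => by have := hs i hi; simp; omega)
            fun _ _ _ => sq_nonneg _
      _ ≤ 4 := by
          rw [Finset.sum_singleton, treeWeight_add_two_sq hj, branchRatio]
          split_ifs <;> norm_num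

/-- `i - 2` is the parent of the vertex `i`: truncated subtraction sends both `1` and `2` to the
root, and the spurious loop `0 ↦ 0` carries the weight `treeWeight m 0 = 0`. -/
noncomputable def treeShift (m : ℕ) : ℓ²(ℕ, ℂ) →L[ℂ] ℓ²(ℕ, ℂ) :=
  weightedComp (fun i => (treeWeight m i : ℂ)) (· - 2) zero_le_four
    fun _ _ => treeWeight_sq_fiber_sum_le

theorem treeShift_injective : Function.Injective (treeShift m) :=
  weightedComp_injective fun j => ⟨if j = 0 then 1 else j + 2, by split_ifs <;> omega,
    by split_ifs <;> exact_mod_cast (treeWeight_pos (by omega)).ne'⟩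

theorem treeShift_single_zero (a : ℂ) :
    treeShift m (lp.single 2 0 a) =
      lp.single 2 1 (treeWeight m 1 * a) + lp.single 2 2 (treeWeight m 2 * a) := by
  refine lp.ext <| funext fun i => ?_
  match i with
  | 0 => simp [treeShift, treeWeight]
  | 1 | 2 | _ + 3 => simp [treeShift]

theorem treeShift_single_of_ne_zero {j : ℕ} (hj : j ≠ 0) (a : ℂ) :
    treeShift m (lp.single 2 j a) = lp.single 2 (j + 2) (treeWeight m (j + 2) * a) := by
  refine lp.ext <| funext fun i => ?_
  simp only [treeShift, weightedComp_apply, lp.coeFn_single, Pi.single_apply]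
  by_cases h : i = j + 2
  · simp [h]
  · have : i - 2 ≠ j := by omega
    simp [h, this]

theorem adjoint_treeShift_single (i : ℕ) (a : ℂ) :
    adjoint (treeShift m) (lp.single 2 i a) = lp.single 2 (i - 2) (treeWeight m i * a) := by
  simp [treeShift, adjoint_weightedComp_single]

theorem adjoint_pow_mul_pow_treeShift_single_of_ne_zero {j : ℕ} (hj : j ≠ 0) (k : ℕ) (a : ℂ) :
    (adjoint (treeShift m) ^ k * treeShift m ^ k) (lp.single 2 j a) =
      lp.single 2 j ((branchRatio j : ℂ) ^ k * a) := by
  induction k generalizing j a with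
  | zero => simp
  | succ k ih =>
    have hw : (treeWeight m (j + 2) : ℂ) ^ 2 = branchRatio j := by
      exact_mod_cast treeWeight_add_two_sq hj
    rw [pow_succ', pow_succ]
    simp only [mul_apply_eq_comp]
    rw [treeShift_single_of_ne_zero hj, ← mul_apply_eq_comp (adjoint (treeShift m) ^ k),
      ih (by omega), adjoint_treeShift_single, Nat.add_sub_cancel, branchRatio_add_two]
    congr 1
    linear_combination (branchRatio j ^ k * a : ℂ) * hw

theorem adjoint_pow_mul_pow_treeShift_single_zero (k : ℕ) (a : ℂ) :
    (adjoint (treeShift m) ^ (k + 1) * treeShift m ^ (k + 1)) (lp.single 2 0 a) =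
      lp.single 2 0 ((((4 ^ k + 4 ^ m / 4 ^ k) / (4 ^ m + 1) : ℝ) : ℂ) * a) := by
  have h1 : (treeWeight m 1 : ℂ) ^ 2 = ((4 ^ m + 1)⁻¹ : ℝ) := by exact_mod_cast treeWeight_one_sq
  have h2 : (treeWeight m 2 : ℂ) ^ 2 = (4 ^ m * (4 ^ m + 1)⁻¹ : ℝ) := by
    exact_mod_cast treeWeight_two_sq
  rw [pow_succ', pow_succ]
  simp only [mul_apply_eq_comp]
  rw [treeShift_single_zero, map_add, map_add, ← mul_apply_eq_comp (adjoint (treeShift m) ^ k),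
    ← mul_apply_eq_comp (adjoint (treeShift m) ^ k),
    adjoint_pow_mul_pow_treeShift_single_of_ne_zero one_ne_zero,
    adjoint_pow_mul_pow_treeShift_single_of_ne_zero two_ne_zero, map_add,
    adjoint_treeShift_single, adjoint_treeShift_single, show 1 - 2 = 0 from rfl, ← lp.single_add,
    branchRatio_one, branchRatio_two]
  congr 1
  push_cast at h1 h2 ⊢
  rw [inv_pow]
  linear_combination (4 ^ k * a) * h1 + ((4 ^ k)⁻¹ * a : ℂ) * h2

theorem adjoint_mul_treeShift_single_zero (a : ℂ) :
    (adjoint (treeShift m) * treeShift m) (lp.single 2 0 a) = lp.single 2 0 a := by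
  have h := adjoint_pow_mul_pow_treeShift_single_zero (m := m) 0 a
  rwa [pow_one, pow_one, (pow_add_div_pow_div_eq_one_iff (by norm_num)).2 (.inl rfl),
    Complex.ofReal_one, one_mul] at h

theorem adjoint_mul_treeShift_single_of_ne_zero {j : ℕ} (hj : j ≠ 0) (a : ℂ) :
    (adjoint (treeShift m) * treeShift m) (lp.single 2 j a) =
      lp.single 2 j (branchRatio j * a) := by
  simpa using adjoint_pow_mul_pow_treeShift_single_of_ne_zero (m := m) hj 1 a

theorem adjoint_mul_treeShift_pow_single_zero (k : ℕ) (a : ℂ) :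
    ((adjoint (treeShift m) * treeShift m) ^ k) (lp.single 2 0 a) = lp.single 2 0 a := by
  rw [lp.pow_apply_single_of_apply_single (c := 1)
    (fun a => by rw [one_mul]; exact adjoint_mul_treeShift_single_zero a), one_pow, one_mul]

theorem adjoint_mul_treeShift_pow_eq_iff {k : ℕ} (hk : k ≠ 0) :
    (adjoint (treeShift m) * treeShift m) ^ k = adjoint (treeShift m) ^ k * treeShift m ^ k ↔
      k = 1 ∨ k = m + 1 := by
  obtain ⟨k, rfl⟩ := Nat.exists_eq_succ_of_ne_zero hk
  have hroot : (((4 ^ k + 4 ^ m / 4 ^ k) / (4 ^ m + 1) : ℝ) : ℂ) = 1 ↔ k = 0 ∨ k = m := by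
    rw [Complex.ofReal_eq_one, pow_add_div_pow_div_eq_one_iff (by norm_num)]
  simp only [Nat.succ_inj, Nat.succ_eq_add_one]
  constructor
  · intro h
    have h0 := congr(($h (lp.single 2 0 1)) 0)
    rw [adjoint_mul_treeShift_pow_single_zero, adjoint_pow_mul_pow_treeShift_single_zero] at h0
    simp only [lp.single_apply_self, mul_one] at h0
    exact hroot.1 h0.symm
  · intro hkm
    refine lp.ext_continuousLinearMap ENNReal.ofNat_ne_top fun j =>
      ContinuousLinearMap.ext fun a => ?_
    simp only [comp_apply, lp.singleContinuousLinearMap_apply]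
    rcases eq_or_ne j 0 with rfl | hj
    · rw [adjoint_mul_treeShift_pow_single_zero, adjoint_pow_mul_pow_treeShift_single_zero,
        hroot.2 hkm, one_mul]
    · rw [lp.pow_apply_single_of_apply_single (adjoint_mul_treeShift_single_of_ne_zero hj),
        adjoint_pow_mul_pow_treeShift_single_of_ne_zero hj]

theorem treeShift_mul_adjoint_mul_self_ne :
    treeShift m * (adjoint (treeShift m) * treeShift m) ≠
      adjoint (treeShift m) * treeShift m * treeShift m := by
  intro h
  have h1 := congr(($h (lp.single 2 0 1)) 1)
  rw [mul_apply_eq_comp (treeShift _), mul_apply_eq_comp (adjoint _ * treeShift _),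
    adjoint_mul_treeShift_single_zero, treeShift_single_zero, map_add,
    adjoint_mul_treeShift_single_of_ne_zero one_ne_zero,
    adjoint_mul_treeShift_single_of_ne_zero two_ne_zero] at h1
  simp only [mul_one, AddSubgroup.coe_add, PreLp.add_apply, lp.single_apply, Pi.single_eq_same,
    ne_eq, OfNat.one_ne_ofNat, not_false_eq_true, Pi.single_eq_of_ne, add_zero,
    branchRatio_one] at h1
  have := treeWeight_pos (m := m) one_ne_zero
  norm_cast at h1
  linarith

end TreeShift

theorem exists_nonquasinormal_single_power_equality_general (n : ℕ) :
    ∃ A : lp (fun _ : ℕ => ℂ) 2 →L[ℂ] lp (fun _ : ℕ => ℂ) 2,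
      Function.Injective A ∧
      (adjoint A * A) ^ n = (adjoint A) ^ n * A ^ n ∧
      (∀ k : ℕ, 2 ≤ k → k ≠ n →
        (adjoint A * A) ^ k ≠ (adjoint A) ^ k * A ^ k) ∧
      A * (adjoint A * A) ≠ (adjoint A * A) * A := by
  refine ⟨treeShift (n - 1), treeShift_injective, ?_, fun k hk hkn h => ?_,
    treeShift_mul_adjoint_mul_self_ne⟩
  · obtain _ | n := n
    · simp
    exact (adjoint_mul_treeShift_pow_eq_iff n.succ_ne_zero).2 (.inr rfl)
  · have := (adjoint_mul_treeShift_pow_eq_iff (by omega)).1 h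
    omega

/-- For every `n ≥ 2` there is a bounded injective operator `A` on `ℓ²(ℕ, ℂ)`
with `(A*A)^n = (A*)^n A^n` but `(A*A)^k ≠ (A*)^k A^k` for every integer
`k ≥ 2` with `k ≠ n`; in particular `A` is not quasinormal. -/
theorem exists_nonquasinormal_single_power_equality (n : ℕ) (hn : 2 ≤ n) :
    ∃ A : lp (fun _ : ℕ => ℂ) 2 →L[ℂ] lp (fun _ : ℕ => ℂ) 2,
      Function.Injective A ∧
      (adjoint A * A) ^ n = (adjoint A) ^ n * A ^ n ∧
      (∀ k : ℕ, 2 ≤ k → k ≠ n →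
        (adjoint A * A) ^ k ≠ (adjoint A) ^ k * A ^ k) ∧
      A * (adjoint A * A) ≠ (adjoint A * A) * A :=
  exists_nonquasinormal_single_power_equality_general n
end
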